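/- arXiv:2207.06743 — 2 statements merged into one kernel-verified Lean document; each statement's English description precedes it below -/
import Mathlib

section
/- Let Cay(G,S) be a connected quintic Cayley graph on a finite abelian group with S = {s, -s, s', -s', s₀}, s₀ an involution, o(s), o(s') > 2, and let D be a perfect code. If g ∈ D, then none of g + s₀, g - s, g - 2s, g - s + s₀, g - 2s + s₀ lies in D, and g - 3s ∈ D or g - 3s + s₀ ∈ D. -/
/-!
The closed neighbourhoods `c + B` of the codewords, with `B = {0, ±s, ±s', s₀}`, partition `G`,
and the six elements of `B` are distinct; hence `c₁ + b₁ = c₂ + b₂` with `c₁, c₂ ∈ D` and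
`b₁, b₂ ∈ B` forces `b₁ = b₂`. Every exclusion is such a collision, possibly after locating the
codeword that dominates a nearby vertex: `g - s + s'` and then `g - s + s' + s₀` rule out
`g - 2s + s₀`; `g - s + s₀` rules out `g - 2s + s'` and `g - 2s + s₀ - s'` being codewords
together; and the codewords dominating `g - 2s` and `g - 2s + s₀` give the last claim, using the
symmetry `s' ↦ -s'`.
-/

/-- The Cayley graph of an additive group `G` with connection set `S`. -/
def cayley (G : Type*) [AddGroup G] (S : Set G) : SimpleGraph G where
  Adj x y := x ≠ y ∧ (y - x ∈ S ∨ x - y ∈ S)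
  symm := by
    constructor
    rintro x y ⟨h1, h2⟩
    exact ⟨h1.symm, h2.symm⟩
  loopless := by
    constructor
    rintro x ⟨h1, -⟩
    exact h1 rfl

/-- A perfect code of a graph: every vertex is at distance at most one
from exactly one vertex of `D`. -/
def IsPerfectCode {V : Type*} (Γ : SimpleGraph V) (D : Set V) : Prop :=
  ∀ v : V, ∃! c : V, c ∈ D ∧ (v = c ∨ Γ.Adj v c)

/-- The generating relation of the graph `Γ_{m,l,h}`. -/
def gammaRel (m l h : ℕ) (p q : ZMod m × ZMod l) : Prop :=
  (q.1 = p.1 + 1 ∧ q.2 = p.2) ∨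
  (q.1 = p.1 ∧ p.2.val ≠ l - 1 ∧ q.2 = p.2 + 1) ∨
  (p.2.val = l - 1 ∧ q.1 = p.1 - (h : ZMod m) ∧ q.2 = 0)

/-- The graph `Γ_{m,l,h}` of Construction 2.1. -/
def Gamma (m l h : ℕ) : SimpleGraph (ZMod m × ZMod l) where
  Adj p q := p ≠ q ∧ (gammaRel m l h p q ∨ gammaRel m l h q p)
  symm := by
    constructor
    rintro p q ⟨h1, h2⟩
    exact ⟨h1.symm, h2.symm⟩
  loopless := by
    constructor
    rintro p ⟨h1, -⟩
    exact h1 rfl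

/-- `tau n m` is the minimal positive divisor `j` of `m` with `gcd (n, m/j) = 1`. -/
noncomputable def tau (n m : ℕ) : ℕ := sInf {j : ℕ | 0 < j ∧ j ∣ m ∧ Nat.gcd n (m / j) = 1}

/-- The graph `Γ'_{m,l,h}` of Construction 2.4. -/
def Gamma' (m l h : ℕ) : SimpleGraph (ZMod m × ZMod l) where
  Adj p q := p ≠ q ∧ (gammaRel m l h p q ∨ gammaRel m l h q p ∨
    (q.1 = p.1 + ((m / 2 : ℕ) : ZMod m) ∧ q.2 = p.2) ∨
    (p.1 = q.1 + ((m / 2 : ℕ) : ZMod m) ∧ p.2 = q.2))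
  symm := by
    constructor
    rintro p q ⟨h1, h2⟩
    exact ⟨h1.symm, by tauto⟩
  loopless := by
    constructor
    rintro p ⟨h1, -⟩
    exact h1 rfl

/-- The graph `Γ''_{m,l,h}` of Construction 2.7. -/
def Gamma'' (m l h : ℕ) : SimpleGraph (ZMod m × ZMod l) where
  Adj p q := p ≠ q ∧ (gammaRel m l h p q ∨ gammaRel m l h q p ∨
    (q.1 = p.1 + (((m + h - Nat.lcm h m : ℤ) / 2 : ℤ) : ZMod m) ∧
      p.2 = q.2 + ((l / 2 : ℕ) : ZMod l)) ∨
    (p.1 = q.1 + (((m + h - Nat.lcm h m : ℤ) / 2 : ℤ) : ZMod m) ∧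
      q.2 = p.2 + ((l / 2 : ℕ) : ZMod l)))
  symm := by
    constructor
    rintro p q ⟨h1, h2⟩
    exact ⟨h1.symm, by tauto⟩
  loopless := by
    constructor
    rintro p ⟨h1, -⟩
    exact h1 rfl

/-- `sigma2 n` is the 2-adic valuation of the natural number `n`. -/
def sigma2 (n : ℕ) : ℕ := padicValNat 2 n

/-- `sigma2Z n` is the 2-adic valuation of the integer `n`. -/
def sigma2Z (n : ℤ) : ℕ := padicValInt 2 n

theorem List.nodup_of_ncard_setOf_mem {α : Type*} {l : List α}
    (h : {a | a ∈ l}.ncard = l.length) : l.Nodup := by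
  classical
  rw [← List.coe_toFinset, Set.ncard_coe_finset] at h
  exact Multiset.coe_nodup.1 (Multiset.toFinset_card_eq_card_iff_nodup.1 h)

theorem cayley_eq_or_adj_iff {G : Type*} [AddGroup G] {S : Set G} (hS : ∀ x ∈ S, -x ∈ S)
    {v c : G} : v = c ∨ (cayley G S).Adj v c ↔ c - v ∈ insert 0 S := by
  have hsymm : v - c ∈ S → c - v ∈ S := fun h => neg_sub v c ▸ hS _ h
  rw [Set.mem_insert_iff, sub_eq_zero, eq_comm (a := c)]
  change v = c ∨ (v ≠ c ∧ (c - v ∈ S ∨ v - c ∈ S)) ↔ v = c ∨ c - v ∈ S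
  tauto

section

variable {G : Type*} [AddCommGroup G]

namespace IsPerfectCode

variable {S D : Set G}

theorem exists_add_mem (hD : IsPerfectCode (cayley G S) D) (hS : ∀ x ∈ S, -x ∈ S) (v : G) :
    ∃ b ∈ insert 0 S, v + b ∈ D := by
  obtain ⟨c, ⟨hc, hvc⟩, -⟩ := hD v
  exact ⟨c - v, (cayley_eq_or_adj_iff hS).1 hvc, by rwa [add_sub_cancel]⟩

theorem eq_of_add_eq_add (hD : IsPerfectCode (cayley G S) D) (hS : ∀ x ∈ S, -x ∈ S)
    {c₁ c₂ b₁ b₂ : G} (hc₁ : c₁ ∈ D) (hc₂ : c₂ ∈ D) (hb₁ : b₁ ∈ insert 0 S)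
    (hb₂ : b₂ ∈ insert 0 S) (h : c₁ + b₁ = c₂ + b₂) : c₁ = c₂ := by
  have hdom : ∀ {c b}, c ∈ D → b ∈ insert 0 S →
      c ∈ D ∧ (c + b = c ∨ (cayley G S).Adj (c + b) c) := by
    intro c b hc hb
    refine ⟨hc, (cayley_eq_or_adj_iff hS).2 ?_⟩
    rw [sub_add_cancel_left]
    rcases hb with rfl | hb
    · simp
    · exact Or.inr (hS b hb)
  obtain ⟨c, -, hu⟩ := hD (c₁ + b₁)
  rw [hu c₁ (hdom hc₁ hb₁), hu c₂ (h ▸ hdom hc₂ hb₂)]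

end IsPerfectCode

structure IsQuinticPerfectCode (s s' s₀ : G) (D : Set G) : Prop where
  neg_s₀ : -s₀ = s₀
  nodup : [0, s, -s, s', -s', s₀].Nodup
  isPerfectCode : IsPerfectCode (cayley G {s, -s, s', -s', s₀}) D

namespace IsQuinticPerfectCode

variable {s s' s₀ : G} {D : Set G}

theorem add_s₀_add_s₀ (hQ : IsQuinticPerfectCode s s' s₀ D) (w : G) : w + s₀ + s₀ = w := by
  rw [add_assoc, add_eq_zero_iff_neg_eq.2 hQ.neg_s₀, add_zero]

theorem neg_mem_connectionSet (hQ : IsQuinticPerfectCode s s' s₀ D) :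
    ∀ x ∈ ({s, -s, s', -s', s₀} : Set G), -x ∈ ({s, -s, s', -s', s₀} : Set G) := by
  rintro x (rfl | rfl | rfl | rfl | rfl) <;> simp [hQ.neg_s₀]

theorem mem_or_add_mem (hQ : IsQuinticPerfectCode s s' s₀ D) (v : G) :
    v ∈ D ∨ v + s ∈ D ∨ v - s ∈ D ∨ v + s' ∈ D ∨ v - s' ∈ D ∨ v + s₀ ∈ D := by
  obtain ⟨b, hb, hvb⟩ := hQ.isPerfectCode.exists_add_mem hQ.neg_mem_connectionSet v
  rcases hb with rfl | rfl | rfl | rfl | rfl | rfl <;>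
    simp only [add_zero, sub_eq_add_neg] at hvb ⊢ <;> simp only [hvb, true_or, or_true]

theorem false_of_add_eq_add (hQ : IsQuinticPerfectCode s s' s₀ D) {c₁ c₂ b₁ b₂ : G}
    (hc₁ : c₁ ∈ D) (hc₂ : c₂ ∈ D) (h : c₁ + b₁ = c₂ + b₂)
    (hb : [b₁, b₂].Sublist [0, s, -s, s', -s', s₀] := by simp [List.sublist_cons_iff]) :
    False := by
  have hmem : ∀ b ∈ [b₁, b₂], b ∈ insert 0 ({s, -s, s', -s', s₀} : Set G) := fun b h => by
    simpa using hb.subset h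
  have hc := hQ.isPerfectCode.eq_of_add_eq_add hQ.neg_mem_connectionSet hc₁ hc₂
    (hmem b₁ (by simp)) (hmem b₂ (by simp)) h
  rw [hc, add_right_inj] at h
  simpa [h] using hQ.nodup.sublist hb

theorem neg (hQ : IsQuinticPerfectCode s s' s₀ D) : IsQuinticPerfectCode s (-s') s₀ D where
  neg_s₀ := hQ.neg_s₀
  nodup := by
    rw [neg_neg]
    exact hQ.nodup.perm (.cons _ (.cons _ (.cons _ (.swap _ _ _))))
  isPerfectCode := by
    rw [neg_neg, Set.insert_comm (-s') s']
    exact hQ.isPerfectCode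

theorem sub_sub_add_notMem (hQ : IsQuinticPerfectCode s s' s₀ D) {g : G} (hg : g ∈ D) :
    g - s - s + s₀ ∉ D := by
  intro hx
  have hv : g - s + s' ∉ D := fun h =>
    hQ.false_of_add_eq_add h hg (by abel : g - s + s' + s = g + s')
  have hvs₀ : g - s + s' + s₀ ∉ D := fun h =>
    hQ.false_of_add_eq_add h hx (by abel : g - s + s' + s₀ + -s = g - s - s + s₀ + s')
  rcases hQ.mem_or_add_mem (g - s + s') with h | h | h | hy | h | h
  · exact hv h
  · exact hQ.false_of_add_eq_add h hg (by abel : g - s + s' + s + 0 = g + s')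
  · exact hQ.false_of_add_eq_add hx h (by abel : g - s - s + s₀ + s' = g - s + s' - s + s₀)
  · rcases hQ.mem_or_add_mem (g - s + s' + s₀) with h | h | h | h | h | h
    · exact hvs₀ h
    -- Writing `-s₀` for `s₀` turns the collision into an identity `abel` can check.
    · exact hQ.false_of_add_eq_add hg h (by abel : g + s' = g - s + s' + s₀ + s + -s₀)
        (by simp [List.sublist_cons_iff, hQ.neg_s₀])
    · exact hQ.false_of_add_eq_add h hx (by abel : g - s + s' + s₀ - s + 0 = g - s - s + s₀ + s')
    · exact hQ.false_of_add_eq_add h hy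
        (by abel : g - s + s' + s₀ + s' + 0 = g - s + s' + s' + s₀)
    · exact hQ.false_of_add_eq_add h hg (by abel : g - s + s' + s₀ - s' + s = g + s₀)
    · rw [hQ.add_s₀_add_s₀] at h
      exact hv h
  · exact hQ.false_of_add_eq_add hg h (by abel : g + 0 = g - s + s' - s' + s)
  · exact hvs₀ h

theorem sub_sub_add_sub_notMem (hQ : IsQuinticPerfectCode s s' s₀ D) {g : G} (hg : g ∈ D)
    (ha : g - s - s + s' ∈ D) : g - s - s + s₀ - s' ∉ D := by
  intro hx
  rcases hQ.mem_or_add_mem (g - s + s₀) with h | h | h | h | h | h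
  · exact hQ.false_of_add_eq_add h hg (by abel : g - s + s₀ + s = g + s₀)
  · exact hQ.false_of_add_eq_add h hg (by abel : g - s + s₀ + s + 0 = g + s₀)
  · exact hQ.sub_sub_add_notMem hg (by convert h using 1; abel)
  · exact hQ.false_of_add_eq_add ha h (by abel : g - s - s + s' + s = g - s + s₀ + s' + -s₀)
      (by simp [List.sublist_cons_iff, hQ.neg_s₀])
  · exact hQ.false_of_add_eq_add hx h (by abel : g - s - s + s₀ - s' + 0 = g - s + s₀ - s' + -s)
  · rw [hQ.add_s₀_add_s₀] at h
    exact hQ.false_of_add_eq_add hg h (by abel : g + 0 = g - s + s)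

theorem sub_sub_sub_add_mem_of_sub_sub_add_mem (hQ : IsQuinticPerfectCode s s' s₀ D) {g : G}
    (hg : g ∈ D) (ha : g - s - s + s' ∈ D) : g - s - s - s + s₀ ∈ D := by
  rcases hQ.mem_or_add_mem (g - s - s + s₀) with h | h | h | h | h | h
  · exact (hQ.sub_sub_add_notMem hg h).elim
  · exact (hQ.false_of_add_eq_add h hg (by abel : g - s - s + s₀ + s + s = g + s₀)).elim
  · convert h using 1; abel
  · exact (hQ.false_of_add_eq_add h ha
      (by abel : g - s - s + s₀ + s' + 0 = g - s - s + s' + s₀)).elim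
  · exact (hQ.sub_sub_add_sub_notMem hg ha h).elim
  · rw [hQ.add_s₀_add_s₀] at h
    exact (hQ.false_of_add_eq_add h hg (by abel : g - s - s + s = g + -s)).elim

theorem sub_sub_sub_mem_or (hQ : IsQuinticPerfectCode s s' s₀ D) {g : G} (hg : g ∈ D) :
    g - s - s - s ∈ D ∨ g - s - s - s + s₀ ∈ D := by
  rcases hQ.mem_or_add_mem (g - s - s) with h | h | h | h | h | h
  · exact (hQ.false_of_add_eq_add h hg (by abel : g - s - s + s = g + -s)).elim
  · exact (hQ.false_of_add_eq_add h hg (by abel : g - s - s + s + 0 = g + -s)).elim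
  · exact Or.inl h
  · exact Or.inr (hQ.sub_sub_sub_add_mem_of_sub_sub_add_mem hg h)
  · rw [sub_eq_add_neg] at h
    exact Or.inr (hQ.neg.sub_sub_sub_add_mem_of_sub_sub_add_mem hg h)
  · exact (hQ.sub_sub_add_notMem hg h).elim

end IsQuinticPerfectCode

theorem nodup_zero_of_ncard_eq_five {s s' s₀ : G}
    (h5 : ({s, -s, s', -s', s₀} : Set G).ncard = 5) (hs₀ : s₀ ≠ 0) :
    [0, s, -s, s', -s', s₀].Nodup := by
  have hS : [s, -s, s', -s', s₀].Nodup :=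
    List.nodup_of_ncard_setOf_mem (by convert h5 using 2 <;> simp [Set.ext_iff])
  refine List.nodup_cons.2 ⟨?_, hS⟩
  have hs : s ≠ 0 := by rintro rfl; simp at hS
  have hs' : s' ≠ 0 := by rintro rfl; simp at hS
  simp [eq_comm (a := (0 : G)), hs, hs', hs₀]

end

theorem stmt3_general (G : Type*) [AddCommGroup G] (s s' s₀ : G)
    (h5 : ({s, -s, s', -s', s₀} : Set G).ncard = 5)
    (h0 : addOrderOf s₀ = 2)
    (D : Set G)
    (hD : IsPerfectCode (cayley G ({s, -s, s', -s', s₀} : Set G)) D)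
    (g : G) (hg : g ∈ D) :
    (g + s₀ ∉ D ∧ g - s ∉ D ∧ g - s - s ∉ D ∧
      g - s + s₀ ∉ D ∧ g - s - s + s₀ ∉ D) ∧
    (g - s - s - s ∈ D ∨ g - s - s - s + s₀ ∈ D) := by
  have hs₀ : s₀ ≠ 0 := by
    rintro rfl
    simp at h0
  have hQ : IsQuinticPerfectCode s s' s₀ D :=
    ⟨neg_eq_self_of_addOrderOf_eq_two h0, nodup_zero_of_ncard_eq_five h5 hs₀, hD⟩
  refine ⟨⟨fun h => ?_, fun h => ?_, fun h => ?_, fun h => ?_, hQ.sub_sub_add_notMem hg⟩,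
    hQ.sub_sub_sub_mem_or hg⟩
  · exact hQ.false_of_add_eq_add h hg (by abel : g + s₀ + 0 = g + s₀)
  · exact hQ.false_of_add_eq_add hg h (by abel : g + 0 = g - s + s)
  · exact hQ.false_of_add_eq_add h hg (by abel : g - s - s + s = g + -s)
  · exact hQ.false_of_add_eq_add h hg (by abel : g - s + s₀ + s = g + s₀)

theorem stmt3 (G : Type*) [AddCommGroup G] [Fintype G] (s s' s₀ : G)
    (h5 : ({s, -s, s', -s', s₀} : Set G).ncard = 5)
    (h0 : addOrderOf s₀ = 2) (hs : 2 < addOrderOf s) (hs' : 2 < addOrderOf s')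
    (hgen : AddSubgroup.closure ({s, -s, s', -s', s₀} : Set G) = ⊤)
    (D : Set G)
    (hD : IsPerfectCode (cayley G ({s, -s, s', -s', s₀} : Set G)) D)
    (g : G) (hg : g ∈ D) :
    (g + s₀ ∉ D ∧ g - s ∉ D ∧ g - s - s ∉ D ∧
      g - s + s₀ ∉ D ∧ g - s - s + s₀ ∉ D) ∧
    (g - s - s - s ∈ D ∨ g - s - s - s + s₀ ∈ D) :=
  stmt3_general G s s' s₀ h5 h0 D hD g hg
end

section
/- Let Cay(G,S) be a connected quintic Cayley graph on a finite abelian group admitting a perfect code, with S = {s, -s, s', -s', s₀}, s₀ an involution, and o(s), o(s') > 2. Then 3 divides both o(s) and o(s'). -/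
open Finset

theorem List.nodup_of_ncard_eq_length {α : Type*} {l : List α}
    (h : {x | x ∈ l}.ncard = l.length) : l.Nodup := by
  classical
  rw [← List.coe_toFinset, Set.ncard_coe_finset] at h
  exact Multiset.toFinset_card_eq_card_iff_nodup.1 h

section Cayley

variable {G : Type*} [AddCommGroup G]

theorem eq_or_cayley_adj_iff {S : Set G} (hS : ∀ x ∈ S, -x ∈ S) {x y : G} :
    x = y ∨ (cayley G S).Adj x y ↔ x - y ∈ insert 0 S := by
  rw [Set.mem_insert_iff, sub_eq_zero]
  constructor
  · rintro (h | ⟨-, h | h⟩)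
    · exact .inl h
    · exact .inr (neg_sub y x ▸ hS _ h)
    · exact .inr h
  · rintro (h | h)
    · exact .inl h
    · by_cases hxy : x = y
      · exact .inl hxy
      · exact .inr ⟨hxy, .inr h⟩

theorem IsPerfectCode.existsUnique_sub_mem {S D : Set G} (hS : ∀ x ∈ S, -x ∈ S)
    (hD : IsPerfectCode (cayley G S) D) (g : G) : ∃! c, c ∈ D ∧ g - c ∈ insert 0 S := by
  simpa only [eq_or_cayley_adj_iff hS] using hD g

theorem nodup_zero_cons_of_nodup {s s' s₀ : G} (h : [s, -s, s', -s', s₀].Nodup) (hs₀ : s₀ ≠ 0) :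
    [0, s, -s, s', -s', s₀].Nodup := by
  refine List.nodup_cons.2 ⟨?_, h⟩
  simp only [List.nodup_cons, List.mem_cons, List.not_mem_nil, List.nodup_nil, or_false, not_or,
    neg_inj, zero_eq_neg, and_true] at h ⊢
  have hs : s ≠ 0 := by rintro rfl; simp at h
  have hs' : s' ≠ 0 := by rintro rfl; simp at h
  exact ⟨hs.symm, hs, hs'.symm, hs', hs₀.symm⟩

end Cayley

theorem card_fiber_eq_sum_of_existsUnique_sub_mem {G H : Type*} [AddCommGroup G] [Fintype G]
    [DecidableEq G] [AddCommGroup H] [DecidableEq H] {T : Finset G} {D : Set G}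
    [DecidablePred (· ∈ D)] (hD : ∀ g, ∃! c, c ∈ D ∧ g - c ∈ T) (φ : G →+ H) (x : G) :
    #{g | φ g = φ x} = ∑ t ∈ T, #{d | d ∈ D ∧ φ d = φ (x - t)} := by
  calc #{g | φ g = φ x} = #{p ∈ T ×ˢ ({d | d ∈ D} : Finset G) | φ (p.1 + p.2) = φ x} := by
        symm
        apply card_bij (fun p _ => p.1 + p.2)
        · intro p hp
          simpa using (mem_filter.1 hp).2
        · rintro ⟨t, d⟩ hp ⟨t', d'⟩ hp' h
          simp only [mem_filter, mem_product, mem_univ, true_and] at hp hp' h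
          obtain ⟨c, -, hc⟩ := hD (t + d)
          have hd : d = c := hc d ⟨hp.1.2, by simpa using hp.1.1⟩
          have hd' : d' = c := hc d' ⟨hp'.1.2, by simpa [h] using hp'.1.1⟩
          subst hd hd'
          simp_all
        · intro g hg
          obtain ⟨c, ⟨hcD, hcT⟩, -⟩ := hD g
          exact ⟨(g - c, c), by simpa [hcD, hcT] using hg, sub_add_cancel g c⟩
    _ = ∑ t ∈ T, #{d | d ∈ D ∧ φ d = φ (x - t)} := by
        rw [card_filter, sum_product]
        refine sum_congr rfl fun t _ => ?_
        rw [← filter_filter, card_filter]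
        refine sum_congr rfl fun d _ => ?_
        simp only [map_add, map_sub, eq_sub_iff_add_eq']

theorem eq_mul_of_forall_eq_mul_add_add {α : Type*} [Finite α] {f : α → ℕ} {u v : α → α}
    {a c : ℕ} (ha : 2 < a) (h : ∀ x, c = a * f x + f (u x) + f (v x)) (x : α) :
    c = (a + 2) * f x := by
  have : Nonempty α := ⟨x⟩
  obtain ⟨x₀, hmax⟩ := Finite.exists_max f
  obtain ⟨x₁, hmin⟩ := Finite.exists_min f
  have hlo : a * f x₀ + 2 * f x₁ ≤ c := by linarith [h x₀, hmin (u x₀), hmin (v x₀)]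
  have hhi : c ≤ a * f x₁ + 2 * f x₀ := by linarith [h x₁, hmax (u x₁), hmax (v x₁)]
  have hconst : f x₀ = f x₁ := le_antisymm (by nlinarith) (hmin x₀)
  have hx : f x = f x₀ := le_antisymm (hmax x) (hconst ▸ hmin x)
  rw [hx]
  rw [← hconst] at hlo hhi
  linarith

theorem three_dvd_addOrderOf_of_existsUnique_sub_mem {G : Type*} [AddCommGroup G] [Fintype G]
    {s a s₀ : G} {D : Set G} (hnd : [0, s, -s, a, -a, s₀].Nodup) (h₀ : 2 • s₀ = 0)
    (hD : ∀ g, ∃! c, c ∈ D ∧ g - c ∈ [0, s, -s, a, -a, s₀]) : 3 ∣ addOrderOf s := by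
  classical
  set n := 2 * addOrderOf s
  set φ : G →+ G := n • AddMonoidHom.id G
  have hs : φ s = 0 := by
    simp [φ, n, mul_nsmul', addOrderOf_nsmul_eq_zero]
  have hs₀ : φ s₀ = 0 := by
    simp [φ, n, mul_nsmul, h₀]
  set f : G → ℕ := fun x => #{d | d ∈ D ∧ φ d = φ x}
  have hcount (x : G) : #{g | φ g = 0} = 4 * f x + f (x - a) + f (x + a) := by
    rw [← map_zero φ, ← AddMonoidHom.card_fiber_eq_of_mem_range φ ⟨x, rfl⟩ ⟨0, rfl⟩,
      card_fiber_eq_sum_of_existsUnique_sub_mem (T := [0, s, -s, a, -a, s₀].toFinset)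
        (by simpa only [List.mem_toFinset] using hD) φ x, List.sum_toFinset _ hnd]
    simp only [List.map_cons, List.map_nil, List.sum_cons, List.sum_nil, map_sub, map_neg,
      map_add, map_zero, hs, hs₀, neg_zero, sub_zero, sub_neg_eq_add, add_zero, f]
    ring
  have hker : Nat.card φ.ker = 6 * f 0 := by
    rw [Nat.card_eq_fintype_card, Fintype.card_subtype]
    simpa [AddMonoidHom.mem_ker] using eq_mul_of_forall_eq_mul_add_add (by norm_num) hcount 0
  obtain ⟨g, hg⟩ := exists_prime_addOrderOf_dvd_card' (G := φ.ker) 3 (by omega)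
  have h3n : 3 ∣ n := by
    rw [← hg, ← AddSubgroup.addOrderOf_coe]
    exact addOrderOf_dvd_of_nsmul_eq_zero g.2
  exact Nat.Coprime.dvd_of_dvd_mul_left (by norm_num) h3n

theorem stmt15_general (G : Type*) [AddCommGroup G] [Fintype G] (s s' s₀ : G)
    (h5 : ({s, -s, s', -s', s₀} : Set G).ncard = 5)
    (h0 : addOrderOf s₀ = 2)
    (D : Set G)
    (hD : IsPerfectCode (cayley G ({s, -s, s', -s', s₀} : Set G)) D) :
    3 ∣ addOrderOf s ∧ 3 ∣ addOrderOf s' := by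
  have hS : ∀ x ∈ ({s, -s, s', -s', s₀} : Set G), -x ∈ ({s, -s, s', -s', s₀} : Set G) := by
    simp only [Set.mem_insert_iff, Set.mem_singleton_iff]
    rintro x (rfl | rfl | rfl | rfl | rfl) <;> simp [neg_eq_self_of_addOrderOf_eq_two h0]
  have hset : ({s, -s, s', -s', s₀} : Set G) = {x | x ∈ [s, -s, s', -s', s₀]} := by
    ext; simp
  have hnd : [0, s, -s, s', -s', s₀].Nodup :=
    nodup_zero_cons_of_nodup (List.nodup_of_ncard_eq_length (hset ▸ h5))
      (by rintro rfl; simp at h0)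
  have htile (g : G) : ∃! c, c ∈ D ∧ g - c ∈ [0, s, -s, s', -s', s₀] := by
    simpa using hD.existsUnique_sub_mem hS g
  have hperm : [0, s, -s, s', -s', s₀].Perm [0, s', -s', s, -s, s₀] :=
    ((List.perm_append_comm (l₁ := [s, -s]) (l₂ := [s', -s'])).append_right [s₀]).cons 0
  have h₀ : 2 • s₀ = 0 := h0 ▸ addOrderOf_nsmul_eq_zero s₀
  exact ⟨three_dvd_addOrderOf_of_existsUnique_sub_mem hnd h₀ htile,
    three_dvd_addOrderOf_of_existsUnique_sub_mem (hperm.nodup_iff.1 hnd) h₀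
      fun g => by simpa only [hperm.mem_iff] using htile g⟩

theorem stmt15 (G : Type*) [AddCommGroup G] [Fintype G] (s s' s₀ : G)
    (h5 : ({s, -s, s', -s', s₀} : Set G).ncard = 5)
    (h0 : addOrderOf s₀ = 2) (hs : 2 < addOrderOf s) (hs' : 2 < addOrderOf s')
    (hgen : AddSubgroup.closure ({s, -s, s', -s', s₀} : Set G) = ⊤)
    (D : Set G)
    (hD : IsPerfectCode (cayley G ({s, -s, s', -s', s₀} : Set G)) D) :
    3 ∣ addOrderOf s ∧ 3 ∣ addOrderOf s' :=
  stmt15_general G s s' s₀ h5 h0 D hD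
end
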